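/- arXiv:1408.1522 — 8 statements merged into one kernel-verified Lean document; each statement's English description precedes it below -/
import Mathlib

section
/- For nonzero distinct integers m, n, if (t,x,y) satisfies y²t = x(x+mt)(x+nt), then the point (X₀, X₁, X₂, X₃) with X₀ = −(x+mt)(y² − m(x+nt)²), X₁ = 2y(x+nt)(x+mt), X₂ = −(x+mt)(y² + m(x+nt)²), X₃ = −(x+nt)(y² + n(x+mt)²) satisfies X₀² + mX₁² = X₂² and X₀² + nX₁² = X₃². -/
/-!
Write `a = x + mt` and `b = x + nt`. For any `c`, the point `(a(y² - cb²), 2yab, a(y² + cb²))`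
lies on `X₀² + cX₁² = X₂²`, since `(p - q)² + 4pq = (p + q)²`; with `c = m` this is the first
quadric. Swapping the roles of `(a, m)` and `(b, n)` gives a point
`(b(y² - na²), 2yab, b(y² + na²))` on the second quadric, and on the cubic its first coordinate
agrees with `a(y² - mb²)`: the difference is `(n - m)(y²t - xab)`.
-/

section

variable {R : Type*} [CommRing R]

theorem sq_mul_sub_add_mul_sq_eq (a b y c : R) :
    (a * (y ^ 2 - c * b ^ 2)) ^ 2 + c * (2 * y * b * a) ^ 2 = (a * (y ^ 2 + c * b ^ 2)) ^ 2 := by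
  ring

theorem mul_sub_comm_of_cubic {m n t x y : R} (h : y ^ 2 * t = x * (x + m * t) * (x + n * t)) :
    (x + n * t) * (y ^ 2 - n * (x + m * t) ^ 2) = (x + m * t) * (y ^ 2 - m * (x + n * t) ^ 2) := by
  linear_combination (n - m) * h

end

theorem psi_maps_cubic_to_quadric_intersection_general (m n : ℤ) (t x y : ℚ)
    (h : y ^ 2 * t = x * (x + (m : ℚ) * t) * (x + (n : ℚ) * t)) :
    let X₀ : ℚ := -(x + (m : ℚ) * t) * (y ^ 2 - (m : ℚ) * (x + (n : ℚ) * t) ^ 2)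
    let X₁ : ℚ := 2 * y * (x + (n : ℚ) * t) * (x + (m : ℚ) * t)
    let X₂ : ℚ := -(x + (m : ℚ) * t) * (y ^ 2 + (m : ℚ) * (x + (n : ℚ) * t) ^ 2)
    let X₃ : ℚ := -(x + (n : ℚ) * t) * (y ^ 2 + (n : ℚ) * (x + (m : ℚ) * t) ^ 2)
    X₀ ^ 2 + (m : ℚ) * X₁ ^ 2 = X₂ ^ 2 ∧ X₀ ^ 2 + (n : ℚ) * X₁ ^ 2 = X₃ ^ 2 := by
  intro X₀ X₁ X₂ X₃
  refine ⟨?_, ?_⟩ <;> simp only [X₀, X₁, X₂, X₃, neg_mul, neg_sq]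
  · exact sq_mul_sub_add_mul_sq_eq _ _ _ _
  · rw [← mul_sub_comm_of_cubic h, mul_right_comm _ (x + (n : ℚ) * t)]
    exact sq_mul_sub_add_mul_sq_eq _ _ _ _

/-- The map `ψ` sends points of the projective cubic `Y²T = X(X + mT)(X + nT)` to points
of the intersection of the quadrics `X₀² + mX₁² = X₂²` and `X₀² + nX₁² = X₃²`. -/
theorem psi_maps_cubic_to_quadric_intersection (m n : ℤ) (hm : m ≠ 0) (hn : n ≠ 0)
    (hmn : m ≠ n) (t x y : ℚ)
    (h : y ^ 2 * t = x * (x + (m : ℚ) * t) * (x + (n : ℚ) * t)) :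
    let X₀ : ℚ := -(x + (m : ℚ) * t) * (y ^ 2 - (m : ℚ) * (x + (n : ℚ) * t) ^ 2)
    let X₁ : ℚ := 2 * y * (x + (n : ℚ) * t) * (x + (m : ℚ) * t)
    let X₂ : ℚ := -(x + (m : ℚ) * t) * (y ^ 2 + (m : ℚ) * (x + (n : ℚ) * t) ^ 2)
    let X₃ : ℚ := -(x + (n : ℚ) * t) * (y ^ 2 + (n : ℚ) * (x + (m : ℚ) * t) ^ 2)
    X₀ ^ 2 + (m : ℚ) * X₁ ^ 2 = X₂ ^ 2 ∧ X₀ ^ 2 + (n : ℚ) * X₁ ^ 2 = X₃ ^ 2 :=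
  psi_maps_cubic_to_quadric_intersection_general m n t x y h
end

section
/- For nonzero distinct integers m, n, the quadratic forms X²+mY² and X²+nY² are concordant if and only if the elliptic curve y² = x(x+m)(x+n) possesses a rational point of (finite or infinite) order greater than two. -/
/-!
A rational solution `(u, z, w) = (X, Z, W) / Y` of `u² + m = z²`, `u² + n = w²` gives the point
`x = (u + z)(u + w)`, `y = x (z + w)` of `y² = x(x + m)(x + n)`, because then
`x + m = (z + u)(z + w)` and `x + n = (w + u)(w + z)`; and `y ≠ 0` since `m`, `n`, `m - n` are the
nonzero numbers `z² - u²`, `w² - u²`, `z² - w²`. Conversely, a point with `y ≠ 0` gives the solution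
`u, z, w = (x² - mn, x² + 2mx + mn, x² + 2nx + mn) / 2y`, for which
`(z - u)(z + u) = m(x + n) · x(x + m) / y² = m`, and similarly for `n`.
The points of order greater than two are exactly the affine points with `y ≠ -y`.
-/

/-- The elliptic curve `y² = x(x + m)(x + n)` as an affine Weierstrass curve over `ℚ`. -/
def E (m n : ℤ) : WeierstrassCurve.Affine ℚ where
  a₁ := 0
  a₂ := (m : ℚ) + n
  a₃ := 0
  a₄ := (m : ℚ) * n
  a₆ := 0

namespace WeierstrassCurve.Affine

variable {F : Type*} [Field F] [DecidableEq F] (W : Affine F)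

lemma exists_point_ne_zero_two_smul_ne_zero_iff :
    (∃ P : W.Point, P ≠ 0 ∧ 2 • P ≠ 0) ↔ ∃ x y : F, W.Equation x y ∧ y ≠ W.negY x y := by
  constructor
  · rintro ⟨_ | @⟨x, y, h⟩, hP0, hP2⟩
    · exact absurd rfl hP0
    · exact ⟨x, y, h.1, fun hy => hP2 (by rw [two_smul]; exact Point.add_self_of_Y_eq hy)⟩
  · rintro ⟨x, y, hxy, hy⟩
    have hns : W.Nonsingular x y := (nonsingular_iff x y).2 ⟨hxy, Or.inr hy⟩
    refine ⟨.some x y hns, Point.some_ne_zero hns, ?_⟩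
    rw [two_smul, Point.add_self_of_Y_ne hy]
    exact Point.some_ne_zero _

end WeierstrassCurve.Affine

lemma E_equation_iff (m n : ℤ) (x y : ℚ) :
    (E m n).Equation x y ↔ y ^ 2 = x * (x + m) * (x + n) := by
  rw [WeierstrassCurve.Affine.equation_iff]
  simp only [E]
  constructor <;> intro h <;> linear_combination h

lemma E_negY (m n : ℤ) (x y : ℚ) : (E m n).negY x y = -y := by
  simp [E]

lemma E_exists_point_ne_zero_two_smul_ne_zero_iff (m n : ℤ) :
    (∃ P : (E m n).Point, P ≠ 0 ∧ 2 • P ≠ 0) ↔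
      ∃ x y : ℚ, y ≠ 0 ∧ y ^ 2 = x * (x + m) * (x + n) := by
  simp only [WeierstrassCurve.Affine.exists_point_ne_zero_two_smul_ne_zero_iff, E_equation_iff,
    E_negY, self_ne_neg]
  exact exists₂_congr fun _ _ => and_comm

section Field

variable {K : Type*} [Field K] {m n u z w : K}

lemma exists_point_of_sq_add_eq_sq (hm : m ≠ 0) (hn : n ≠ 0) (hmn : m ≠ n)
    (hz : u ^ 2 + m = z ^ 2) (hw : u ^ 2 + n = w ^ 2) :
    ∃ x y : K, y ≠ 0 ∧ y ^ 2 = x * (x + m) * (x + n) := by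
  have huz : u + z ≠ 0 := fun h => hm (by linear_combination hz + (z - u) * h)
  have huw : u + w ≠ 0 := fun h => hn (by linear_combination hw + (w - u) * h)
  have hzw : z + w ≠ 0 := fun h => hmn (by linear_combination hz - hw + (z - w) * h)
  refine ⟨(u + z) * (u + w), (u + z) * (u + w) * (z + w), by positivity, ?_⟩
  linear_combination
    (-(u + z) * (u + w)) * (((u + z) * (u + w) + n) * hz + (z + u) * (z + w) * hw)

lemma exists_sq_add_eq_sq_of_point (h2 : (2 : K) ≠ 0) {x y : K} (hy : y ≠ 0)
    (hxy : y ^ 2 = x * (x + m) * (x + n)) :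
    ∃ u z w : K, u ^ 2 + m = z ^ 2 ∧ u ^ 2 + n = w ^ 2 := by
  refine ⟨(x ^ 2 - m * n) / (2 * y), (x ^ 2 + 2 * m * x + m * n) / (2 * y),
    (x ^ 2 + 2 * n * x + m * n) / (2 * y), ?_, ?_⟩
  · field_simp
    linear_combination 4 * m * hxy
  · field_simp
    linear_combination 4 * n * hxy

end Field

lemma exists_int_sq_add_eq_sq_iff_exists_rat (m n : ℤ) :
    (∃ X Y Z W : ℤ, Y ≠ 0 ∧ X ^ 2 + m * Y ^ 2 = Z ^ 2 ∧ X ^ 2 + n * Y ^ 2 = W ^ 2) ↔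
      ∃ u z w : ℚ, u ^ 2 + m = z ^ 2 ∧ u ^ 2 + n = w ^ 2 := by
  constructor
  · rintro ⟨X, Y, Z, W, hY, hZ, hW⟩
    have hY' : (Y : ℚ) ≠ 0 := by exact_mod_cast hY
    have hZ' : (X : ℚ) ^ 2 + m * Y ^ 2 = Z ^ 2 := by exact_mod_cast hZ
    have hW' : (X : ℚ) ^ 2 + n * Y ^ 2 = W ^ 2 := by exact_mod_cast hW
    refine ⟨X / Y, Z / Y, W / Y, ?_, ?_⟩
    · field_simp
      linear_combination hZ'
    · field_simp
      linear_combination hW'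
  · rintro ⟨u, z, w, hz, hw⟩
    refine ⟨u.num * z.den * w.den, u.den * z.den * w.den, u.den * z.num * w.den,
      u.den * z.den * w.num, by positivity, ?_, ?_⟩
    all_goals
      apply Int.cast_injective (α := ℚ)
      push_cast
      simp only [← Rat.mul_den_eq_num]
    · linear_combination ((u.den : ℚ) * z.den * w.den) ^ 2 * hz
    · linear_combination ((u.den : ℚ) * z.den * w.den) ^ 2 * hw

/-- The forms `X² + mY²` and `X² + nY²` are concordant iff `E(m,n)` has a rational point
of (finite or infinite) order greater than two. -/
theorem concordant_iff_exists_point_of_order_gt_two (m n : ℤ) (hm : m ≠ 0) (hn : n ≠ 0)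
    (hmn : m ≠ n) :
    (∃ X Y Z W : ℤ, Y ≠ 0 ∧ X ^ 2 + m * Y ^ 2 = Z ^ 2 ∧ X ^ 2 + n * Y ^ 2 = W ^ 2) ↔
      ∃ P : (E m n).Point, P ≠ 0 ∧ 2 • P ≠ 0 := by
  rw [exists_int_sq_add_eq_sq_iff_exists_rat, E_exists_point_ne_zero_two_smul_ne_zero_iff]
  constructor
  · rintro ⟨u, z, w, hz, hw⟩
    exact exists_point_of_sq_add_eq_sq (by exact_mod_cast hm) (by exact_mod_cast hn)
      (by exact_mod_cast hmn) hz hw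
  · rintro ⟨x, y, hy, hxy⟩
    exact exists_sq_add_eq_sq_of_point two_ne_zero hy hxy
end

section
/- The points (3, 6), (3, −6), (−1, 2), (−1, −2) on the elliptic curve y² = x(x−1)(x+3) are points of order exactly 4. -/
/-- The elliptic curve `y² = x(x − 1)(x + 3)`, i.e. `E(−1, 3)`, over `ℚ`. -/
def Em13 : WeierstrassCurve.Affine ℚ where
  a₁ := 0
  a₂ := 2
  a₃ := 0
  a₄ := -3
  a₆ := 0

/-!
The tangent to the curve at `(3, 6)` or `(−1, 2)` passes through the rational
2-torsion point `(1, 0)`, so doubling these points gives `(1, 0)`, a point of order 2;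
hence they have order 4, and so do their negatives `(3, −6)` and `(−1, −2)`.
-/

lemma addOrderOf_eq_four_of_addOrderOf_two_nsmul {G : Type*} [AddMonoid G] {x : G}
    (h : addOrderOf (2 • x) = 2) : addOrderOf x = 4 := by
  refine addOrderOf_eq_prime_pow (p := 2) (n := 1) (fun h0 ↦ ?_) ?_
  · rw [pow_one] at h0
    simp [h0] at h
  · rw [pow_succ, pow_one, mul_nsmul]
    have := addOrderOf_nsmul_eq_zero (2 • x)
    rwa [h] at this

open WeierstrassCurve.Affine

namespace WeierstrassCurve.Affine.Point

variable {F : Type*} [Field F] [DecidableEq F] {W : Affine F}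

lemma addOrderOf_some_of_Y_eq {x y : F} (h : W.Nonsingular x y) (hy : y = W.negY x y) :
    addOrderOf (some _ _ h) = 2 :=
  addOrderOf_eq_prime (by rw [two_nsmul]; exact add_self_of_Y_eq hy) (some_ne_zero h)

lemma two_nsmul_some_of_Y_ne {x y x' y' : F} {h : W.Nonsingular x y} (h' : W.Nonsingular x' y')
    (hy : y ≠ W.negY x y) (hx' : W.addX x x (W.slope x x y y) = x')
    (hy' : W.addY x x y (W.slope x x y y) = y') :
    2 • some _ _ h = some _ _ h' := by
  subst hx' hy'
  rw [two_nsmul, add_self_of_Y_ne hy]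

end WeierstrassCurve.Affine.Point

namespace Em13

lemma Δ_ne_zero : Em13.Δ ≠ 0 := by
  norm_num [Em13, WeierstrassCurve.Δ, WeierstrassCurve.b₂, WeierstrassCurve.b₄,
    WeierstrassCurve.b₆, WeierstrassCurve.b₈]

lemma nonsingular {x y : ℚ} (h : y ^ 2 = x * (x - 1) * (x + 3)) : Em13.Nonsingular x y :=
  (equation_iff_nonsingular_of_Δ_ne_zero Δ_ne_zero).mp <| by
    rw [equation_iff]
    simp only [Em13]
    linear_combination h

lemma neg_some {x y : ℚ} (h : Em13.Nonsingular x y) (h' : Em13.Nonsingular x (-y)) :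
    -Point.some _ _ h = Point.some _ _ h' := by
  rw [Point.neg_some, Point.some.injEq]
  exact ⟨rfl, by simp [Em13]⟩

lemma nonsingular_one_zero : Em13.Nonsingular 1 0 := nonsingular (by norm_num)

lemma nonsingular_three_six : Em13.Nonsingular 3 6 := nonsingular (by norm_num)

lemma nonsingular_neg_one_two : Em13.Nonsingular (-1) 2 := nonsingular (by norm_num)

lemma addOrderOf_some_one_zero : addOrderOf (Point.some _ _ nonsingular_one_zero) = 2 :=
  Point.addOrderOf_some_of_Y_eq _ (by norm_num [Em13])

lemma two_nsmul_some_three_six :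
    2 • Point.some _ _ nonsingular_three_six = Point.some _ _ nonsingular_one_zero :=
  Point.two_nsmul_some_of_Y_ne _ (by norm_num [Em13])
    (by norm_num [addX, negY, Em13]) (by norm_num [addY, negAddY, addX, negY, Em13])

lemma two_nsmul_some_neg_one_two :
    2 • Point.some _ _ nonsingular_neg_one_two = Point.some _ _ nonsingular_one_zero :=
  Point.two_nsmul_some_of_Y_ne _ (by norm_num [Em13])
    (by norm_num [addX, negY, Em13]) (by norm_num [addY, negAddY, addX, negY, Em13])

end Em13

/-- The points `(3, ±6)` and `(−1, ±2)` lie on `y² = x(x − 1)(x + 3)` and have order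
exactly 4 in the Mordell–Weil group. -/
theorem points_of_order_four_on_Em13 :
    (∃ h : Em13.Nonsingular 3 6, addOrderOf (WeierstrassCurve.Affine.Point.some _ _ h) = 4) ∧
    (∃ h : Em13.Nonsingular 3 (-6), addOrderOf (WeierstrassCurve.Affine.Point.some _ _ h) = 4) ∧
    (∃ h : Em13.Nonsingular (-1) 2, addOrderOf (WeierstrassCurve.Affine.Point.some _ _ h) = 4) ∧
    (∃ h : Em13.Nonsingular (-1) (-2), addOrderOf (WeierstrassCurve.Affine.Point.some _ _ h) = 4) := by
  have order_three_six : addOrderOf (Point.some _ _ Em13.nonsingular_three_six) = 4 :=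
    addOrderOf_eq_four_of_addOrderOf_two_nsmul <| by
      rw [Em13.two_nsmul_some_three_six, Em13.addOrderOf_some_one_zero]
  have order_neg_one_two : addOrderOf (Point.some _ _ Em13.nonsingular_neg_one_two) = 4 :=
    addOrderOf_eq_four_of_addOrderOf_two_nsmul <| by
      rw [Em13.two_nsmul_some_neg_one_two, Em13.addOrderOf_some_one_zero]
  have nonsingular_three_neg_six : Em13.Nonsingular 3 (-6) := Em13.nonsingular (by norm_num)
  have nonsingular_neg_one_neg_two : Em13.Nonsingular (-1) (-2) := Em13.nonsingular (by norm_num)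
  refine ⟨⟨_, order_three_six⟩, ⟨nonsingular_three_neg_six, ?_⟩, ⟨_, order_neg_one_two⟩,
    ⟨nonsingular_neg_one_neg_two, ?_⟩⟩
  · rw [← Em13.neg_some Em13.nonsingular_three_six, addOrderOf_neg, order_three_six]
  · rw [← Em13.neg_some Em13.nonsingular_neg_one_two, addOrderOf_neg, order_neg_one_two]
end

section
/- The elliptic curve y² = x(x+m)(x+n) with m = −pk, n = qk (p, q coprime positive integers, k squarefree positive integer) has a rational point of order 4 if and only if both −m = pk and n − m = (p+q)k are perfect squares. -/
namespace WeierstrassCurve.Affine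

variable {F : Type*} [Field F]

namespace Point

variable [DecidableEq F] {W : WeierstrassCurve.Affine F}

lemma some_add_self_eq_zero_iff {x y : F} (h : W.Nonsingular x y) :
    some x y h + some x y h = 0 ↔ y = W.negY x y :=
  ⟨fun h0 => by_contra fun hy => some_ne_zero _ ((add_self_of_Y_ne hy).symm.trans h0),
    add_self_of_Y_eq⟩

lemma addOrderOf_eq_four_iff (P : W.Point) :
    addOrderOf P = 4 ↔ ∃ x y, ∃ h : W.Nonsingular x y, 2 • P = some x y h ∧ y = W.negY x y := by
  constructor
  · intro hP
    have h2P : 2 • P ≠ 0 := fun h0 => by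
      have := addOrderOf_dvd_of_nsmul_eq_zero h0
      rw [hP] at this
      norm_num at this
    have h4P : 2 • P + 2 • P = 0 := by
      rw [← add_nsmul]
      simpa only [hP] using addOrderOf_nsmul_eq_zero P
    rcases hQ : 2 • P with _ | @⟨x, y, h⟩
    · exact absurd hQ h2P
    · rw [hQ] at h4P
      exact ⟨x, y, h, rfl, (some_add_self_eq_zero_iff h).1 h4P⟩
  · rintro ⟨x, y, h, h2P, hy⟩
    refine (addOrderOf_eq_prime_pow (p := 2) (n := 1) ?_ ?_).trans (by norm_num)
    · rw [pow_one, h2P]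
      exact some_ne_zero h
    · rw [pow_succ, pow_one, mul_nsmul, h2P, two_nsmul]
      exact add_self_of_Y_eq hy

end Point

/-- The curve `y² = (x - e₁)(x - e₂)(x - e₃)`. -/
def ofRoots (e₁ e₂ e₃ : F) : WeierstrassCurve.Affine F where
  a₁ := 0
  a₂ := -(e₁ + e₂ + e₃)
  a₃ := 0
  a₄ := e₁ * e₂ + e₁ * e₃ + e₂ * e₃
  a₆ := -(e₁ * e₂ * e₃)

variable {e₁ e₂ e₃ x y : F}

lemma ofRoots_equation_iff :
    (ofRoots e₁ e₂ e₃).Equation x y ↔ y ^ 2 = (x - e₁) * (x - e₂) * (x - e₃) := by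
  rw [equation_iff]
  simp only [ofRoots]
  constructor <;> intro h <;> linear_combination h

lemma ofRoots_negY : (ofRoots e₁ e₂ e₃).negY x y = -y := by
  simp [negY, ofRoots]

lemma ofRoots_swap₁₂ : ofRoots e₂ e₁ e₃ = ofRoots e₁ e₂ e₃ := by
  ext <;> simp only [ofRoots] <;> ring

lemma ofRoots_swap₁₃ : ofRoots e₃ e₂ e₁ = ofRoots e₁ e₂ e₃ := by
  ext <;> simp only [ofRoots] <;> ring

lemma ofRoots_equation_add_mul {a b : F} (ha : e₁ - e₂ = a * a) (hb : e₁ - e₃ = b * b) :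
    (ofRoots e₁ e₂ e₃).Equation (e₁ + a * b) (a * b * (a + b)) := by
  rw [ofRoots_equation_iff]
  linear_combination (-a * b * (a * b + e₁ - e₃)) * ha + (-a * b * (a * b + a * a)) * hb

variable [DecidableEq F]

lemma ofRoots_slope_mul (hy : y ≠ -y) :
    (ofRoots e₁ e₂ e₃).slope x x y y * (2 * y) =
      3 * x ^ 2 - 2 * (e₁ + e₂ + e₃) * x + (e₁ * e₂ + e₁ * e₃ + e₂ * e₃) := by
  have h2y : 2 * y ≠ 0 := fun h0 => hy (by linear_combination h0)
  rw [slope_of_Y_ne rfl (by rwa [ofRoots_negY]), ofRoots_negY]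
  simp only [ofRoots]
  rw [show y - -y = 2 * y by ring, div_mul_cancel₀ _ h2y]
  ring

lemma ofRoots_addX_sub_mul_sq (h : (ofRoots e₁ e₂ e₃).Equation x y) (hy : y ≠ -y) :
    ((ofRoots e₁ e₂ e₃).addX x x ((ofRoots e₁ e₂ e₃).slope x x y y) - e₁) * (2 * y) ^ 2 =
      ((x - e₁) ^ 2 - (e₁ - e₂) * (e₁ - e₃)) ^ 2 := by
  have hL := ofRoots_slope_mul (e₁ := e₁) (e₂ := e₂) (e₃ := e₃) (x := x) hy
  set L := (ofRoots e₁ e₂ e₃).slope x x y y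
  rw [addX]
  simp only [ofRoots]
  linear_combination
    (L * (2 * y) + 3 * x ^ 2 - 2 * (e₁ + e₂ + e₃) * x + (e₁ * e₂ + e₁ * e₃ + e₂ * e₃)) * hL
      - 4 * (2 * x + e₁ - (e₁ + e₂ + e₃)) * ofRoots_equation_iff.1 h

lemma isSquare_ofRoots_addX_sub (h : (ofRoots e₁ e₂ e₃).Equation x y) (hy : y ≠ -y) :
    IsSquare ((ofRoots e₁ e₂ e₃).addX x x ((ofRoots e₁ e₂ e₃).slope x x y y) - e₁) := by
  have h2y : 2 * y ≠ 0 := fun h0 => hy (by linear_combination h0)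
  refine ⟨((x - e₁) ^ 2 - (e₁ - e₂) * (e₁ - e₃)) / (2 * y), ?_⟩
  rw [div_mul_div_comm, eq_div_iff (mul_ne_zero h2y h2y)]
  linear_combination ofRoots_addX_sub_mul_sq h hy

lemma isSquare_X_sub_of_two_nsmul_eq_some {P : (ofRoots e₁ e₂ e₃).Point} {X Y : F}
    {h : (ofRoots e₁ e₂ e₃).Nonsingular X Y} (hP : 2 • P = .some X Y h) :
    IsSquare (X - e₁) ∧ IsSquare (X - e₂) ∧ IsSquare (X - e₃) := by
  rcases P with _ | @⟨x, y, hxy⟩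
  · exact absurd hP.symm (Point.some_ne_zero h)
  have hy : y ≠ (ofRoots e₁ e₂ e₃).negY x y := fun hy => by
    rw [two_nsmul, Point.add_self_of_Y_eq hy] at hP
    exact Point.some_ne_zero h hP.symm
  rw [two_nsmul, Point.add_self_of_Y_ne hy, Point.some.injEq] at hP
  obtain ⟨rfl, -⟩ := hP
  rw [ofRoots_negY] at hy
  refine ⟨isSquare_ofRoots_addX_sub hxy.1 hy, ?_, ?_⟩
  · have := isSquare_ofRoots_addX_sub (e₁ := e₂) (e₂ := e₁) (e₃ := e₃)
      (by rw [ofRoots_swap₁₂]; exact hxy.1) hy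
    rwa [ofRoots_swap₁₂] at this
  · have := isSquare_ofRoots_addX_sub (e₁ := e₃) (e₂ := e₂) (e₃ := e₁)
      (by rw [ofRoots_swap₁₃]; exact hxy.1) hy
    rwa [ofRoots_swap₁₃] at this

lemma exists_addOrderOf_eq_four_of_sub_eq_mul_self {a b : F}
    (ha : e₁ - e₂ = a * a) (hb : e₁ - e₃ = b * b) (h2y : 2 * (a * b * (a + b)) ≠ 0) :
    ∃ P : (ofRoots e₁ e₂ e₃).Point, addOrderOf P = 4 := by
  set x := e₁ + a * b
  set y := a * b * (a + b)
  have hy : y ≠ -y := fun h => h2y (by linear_combination h)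
  have hns : (ofRoots e₁ e₂ e₃).Nonsingular x y := by
    refine (nonsingular_iff _ _).2 ⟨ofRoots_equation_add_mul ha hb, Or.inr ?_⟩
    simpa only [ofRoots, zero_mul, sub_zero] using hy
  have hL : (ofRoots e₁ e₂ e₃).slope x x y y = a + b := by
    refine mul_right_cancel₀ h2y ((ofRoots_slope_mul hy).trans ?_)
    linear_combination (a * b + e₁ - e₃ + a * b) * ha + (a * b + a * a + a * b) * hb
  have hX : (ofRoots e₁ e₂ e₃).addX x x ((ofRoots e₁ e₂ e₃).slope x x y y) = e₁ := by
    rw [addX, hL]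
    simp only [ofRoots]
    linear_combination -ha - hb
  refine ⟨.some x y hns, (Point.addOrderOf_eq_four_iff _).2
    ⟨_, _, _, (two_nsmul _).trans (Point.add_self_of_Y_ne (by rwa [ofRoots_negY])), ?_⟩⟩
  rw [addY, negAddY, hX, hL, ofRoots_negY, ofRoots_negY]
  ring

lemma exists_addOrderOf_eq_four_of_isSquare [NeZero (2 : F)] (h₂ : e₁ ≠ e₂) (h₃ : e₁ ≠ e₃)
    (sq₂ : IsSquare (e₁ - e₂)) (sq₃ : IsSquare (e₁ - e₃)) :
    ∃ P : (ofRoots e₁ e₂ e₃).Point, addOrderOf P = 4 := by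
  obtain ⟨a, ha⟩ := sq₂
  obtain ⟨b, hb⟩ := sq₃
  have ha₀ : a ≠ 0 := by
    rintro rfl
    exact h₂ (sub_eq_zero.1 (by simpa using ha))
  have hb₀ : b ≠ 0 := by
    rintro rfl
    exact h₃ (sub_eq_zero.1 (by simpa using hb))
  -- `(a + b) + (a - b) = 2a ≠ 0`, so one of the square roots `±b` makes `a + b ≠ 0`
  obtain ⟨b, hb, hb₀, hab⟩ : ∃ b', e₁ - e₃ = b' * b' ∧ b' ≠ 0 ∧ a + b' ≠ 0 := by
    by_cases hab : a + b = 0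
    · refine ⟨-b, by rw [hb]; ring, neg_ne_zero.2 hb₀, fun h => ha₀ ?_⟩
      exact (mul_eq_zero.1 (by linear_combination hab + h : (2 : F) * a = 0)).resolve_left
        two_ne_zero
    · exact ⟨b, hb, hb₀, hab⟩
  exact exists_addOrderOf_eq_four_of_sub_eq_mul_self ha hb
    (mul_ne_zero two_ne_zero (mul_ne_zero (mul_ne_zero ha₀ hb₀) hab))

section Ordered

variable [LinearOrder F] [IsStrictOrderedRing F]

lemma isSquare_sub_of_addOrderOf_eq_four (h₂ : e₂ < e₁) (h₃ : e₃ < e₁)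
    {P : (ofRoots e₁ e₂ e₃).Point} (hP : addOrderOf P = 4) :
    IsSquare (e₁ - e₂) ∧ IsSquare (e₁ - e₃) := by
  obtain ⟨X, Y, h, h2P, hY⟩ := (Point.addOrderOf_eq_four_iff P).1 hP
  obtain ⟨sq₁, sq₂, sq₃⟩ := isSquare_X_sub_of_two_nsmul_eq_some h2P
  have hroot : (X - e₁) * (X - e₂) * (X - e₃) = 0 := by
    have hY0 : Y = 0 := by
      rw [ofRoots_negY] at hY
      linarith
    rw [← ofRoots_equation_iff.1 h.1, hY0]
    ring
  have hX : X = e₁ := by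
    by_contra hX
    have h₁ : 0 < X - e₁ := lt_of_le_of_ne sq₁.nonneg (sub_ne_zero.2 hX).symm
    exact hroot.not_gt (mul_pos (mul_pos h₁ (by linarith)) (by linarith))
  subst hX
  exact ⟨sq₂, sq₃⟩

theorem exists_addOrderOf_eq_four_iff (h₂ : e₂ < e₁) (h₃ : e₃ < e₁) :
    (∃ P : (ofRoots e₁ e₂ e₃).Point, addOrderOf P = 4) ↔
      IsSquare (e₁ - e₂) ∧ IsSquare (e₁ - e₃) :=
  ⟨fun ⟨_, hP⟩ => isSquare_sub_of_addOrderOf_eq_four h₂ h₃ hP,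
    fun ⟨sq₂, sq₃⟩ => exists_addOrderOf_eq_four_of_isSquare h₂.ne' h₃.ne' sq₂ sq₃⟩

end Ordered

end WeierstrassCurve.Affine

open WeierstrassCurve.Affine

theorem exists_point_of_order_four_iff_general (p q k : ℕ) (hp : 0 < p) (hk : 0 < k) :
    (∃ P : (E (-(p * k : ℤ)) ((q * k : ℕ) : ℤ)).Point, addOrderOf P = 4) ↔
      IsSquare (p * k) ∧ IsSquare ((p + q) * k) := by
  have hE : E (-(p * k : ℤ)) ((q * k : ℕ) : ℤ) = ofRoots (p * k : ℚ) 0 (-(q * k)) := by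
    ext <;> simp only [E, ofRoots] <;> push_cast <;> ring
  have h₂ : (0 : ℚ) < p * k := by positivity
  have h₃ : -((q : ℚ) * k) < p * k := by
    have : (0 : ℚ) ≤ q * k := by positivity
    linarith
  rw [hE, exists_addOrderOf_eq_four_iff h₂ h₃, ← Rat.isSquare_natCast_iff,
    ← Rat.isSquare_natCast_iff (n := (p + q) * k)]
  push_cast
  ring_nf

/-- With `m = −pk`, `n = qk` (`p, q` coprime, `k` squarefree), the curve
`y² = x(x + m)(x + n)` has a rational point of order 4 iff `−m = pk` and
`n − m = (p + q)k` are perfect squares. -/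
theorem exists_point_of_order_four_iff (p q k : ℕ) (hp : 0 < p) (hq : 0 < q) (hk : 0 < k)
    (hpq : Nat.Coprime p q) (hsqf : Squarefree k) :
    (∃ P : (E (-(p * k : ℤ)) ((q * k : ℕ) : ℤ)).Point, addOrderOf P = 4) ↔
      IsSquare (p * k) ∧ IsSquare ((p + q) * k) :=
  exists_point_of_order_four_iff_general p q k hp hk
end

section
/- Let ξ, η, ζ be positive integers with ξ² + η² = ζ², and set m = −ξ⁴ and n = η⁴ − ξ⁴. Then the point (ξζ(ξ+η)(ζ+η), ξηζ(ξ+η)(ζ+ξ)(ζ+η)) is a point of order 8 on the elliptic curve y² = x(x+m)(x+n). -/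
namespace WeierstrassCurve.Affine.Point

variable {F : Type*} [Field F] [DecidableEq F] {W : Affine F} {x y : F}

lemma exists_two_nsmul_some_eq {x' y' : F} (h : W.Nonsingular x y) (hy : y ≠ W.negY x y)
    (hx' : W.addX x x (W.slope x x y y) = x') (hy' : W.addY x x y (W.slope x x y y) = y') :
    ∃ h' : W.Nonsingular x' y', (2 : ℕ) • some x y h = some x' y' h' := by
  subst hx' hy'
  exact ⟨nonsingular_add h h fun hxy => hy hxy.2, by rw [two_nsmul, add_self_of_Y_ne hy]⟩

lemma two_nsmul_some_of_Y_eq (h : W.Nonsingular x y) (hy : y = W.negY x y) :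
    (2 : ℕ) • some x y h = 0 := by
  rw [two_nsmul, add_self_of_Y_eq hy]

end WeierstrassCurve.Affine.Point

namespace E

open WeierstrassCurve.Affine

variable {m n : ℤ} {x y : ℚ}

lemma negY_eq : (E m n).negY x y = -y := by
  simp [negY, E]

lemma nonsingular_of_Y_ne_zero (hy : y ≠ 0) (h : y ^ 2 = x * (x + m) * (x + n)) :
    (E m n).Nonsingular x y := by
  rw [nonsingular_iff, equation_iff]
  refine ⟨?_, Or.inr ?_⟩
  · simp only [E]
    linear_combination h
  · simp only [E, sub_zero]
    contrapose! hy
    linarith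

lemma exists_two_nsmul_some_eq (h : (E m n).Nonsingular x y) (hy : y ≠ 0) {ℓ x' y' : ℚ}
    (hℓ : (x + m) * (x + n) + x * (x + n) + x * (x + m) = 2 * y * ℓ)
    (hx' : ℓ ^ 2 - (m + n) - 2 * x = x') (hy' : ℓ * (x - x') - y = y') :
    ∃ h' : (E m n).Nonsingular x' y', (2 : ℕ) • Point.some x y h = Point.some x' y' h' := by
  have hy_ne : y ≠ (E m n).negY x y := by
    rw [negY_eq]
    contrapose! hy
    linarith
  have hslope : (E m n).slope x x y y = ℓ := by
    rw [slope_of_Y_ne rfl hy_ne, negY_eq, div_eq_iff (by simpa [two_mul] using hy)]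
    simp only [E]
    linear_combination hℓ
  refine Point.exists_two_nsmul_some_eq h hy_ne ?_ ?_
  · rw [hslope]
    simp only [addX, E]
    linear_combination hx'
  · rw [hslope]
    simp only [addY, negAddY, addX, negY, E]
    linear_combination hy' - ℓ * hx'

lemma two_nsmul_some_zero (h : (E m n).Nonsingular x 0) : (2 : ℕ) • Point.some x 0 h = 0 :=
  Point.two_nsmul_some_of_Y_eq h (by rw [negY_eq, neg_zero])

section Pythagorean

variable {a b c : ℚ}

lemma pythagorean_X_add_m (hc : c ^ 2 = a ^ 2 + b ^ 2) (hm : (m : ℚ) = -a ^ 4) :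
    a * c * (a + b) * (c + b) + m = a * b * (c + a) * (c + b) := by
  rw [hm]
  linear_combination a ^ 2 * hc

lemma pythagorean_X_add_n (hc : c ^ 2 = a ^ 2 + b ^ 2) (hn : (n : ℚ) = b ^ 4 - a ^ 4) :
    a * c * (a + b) * (c + b) + n = b * c * (a + b) * (c + a) := by
  rw [hn]
  linear_combination (a ^ 2 - b ^ 2) * hc

variable (hc : c ^ 2 = a ^ 2 + b ^ 2) (hm : (m : ℚ) = -a ^ 4) (hn : (n : ℚ) = b ^ 4 - a ^ 4)
include hc hm hn

lemma nonsingular_pythagorean (ha : 0 < a) (hb : 0 < b) (hc₀ : 0 < c) :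
    (E m n).Nonsingular (a * c * (a + b) * (c + b))
      (a * b * c * (a + b) * (c + a) * (c + b)) := by
  refine nonsingular_of_Y_ne_zero (by positivity) ?_
  rw [pythagorean_X_add_m hc hm, pythagorean_X_add_n hc hn]
  ring

lemma exists_two_nsmul_pythagorean_eq (ha : 0 < a) (hb : 0 < b) (hc₀ : 0 < c) :
    ∃ h : (E m n).Nonsingular (a ^ 2 * c ^ 2) (a ^ 2 * b ^ 2 * c ^ 2),
      (2 : ℕ) • Point.some _ _ (nonsingular_pythagorean hc hm hn ha hb hc₀) =
        Point.some _ _ h := by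
  refine exists_two_nsmul_some_eq _ (by positivity) (ℓ := a * b + b * c + c * a) ?_ ?_ ?_
  · rw [pythagorean_X_add_m hc hm, pythagorean_X_add_n hc hn]
    ring
  · rw [hm, hn]
    linear_combination (b ^ 2 - 2 * a ^ 2) * hc
  · ring

lemma exists_two_nsmul_sq_mul_sq_eq
    (h : (E m n).Nonsingular (a ^ 2 * c ^ 2) (a ^ 2 * b ^ 2 * c ^ 2))
    (ha : a ≠ 0) (hb : b ≠ 0) (hc₀ : c ≠ 0) :
    ∃ h' : (E m n).Nonsingular (a ^ 4) 0, (2 : ℕ) • Point.some _ _ h = Point.some _ _ h' := by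
  have hxm : a ^ 2 * c ^ 2 + m = a ^ 2 * b ^ 2 := by
    rw [hm]
    linear_combination a ^ 2 * hc
  have hxn : a ^ 2 * c ^ 2 + n = b ^ 2 * c ^ 2 := by
    rw [hn]
    linear_combination (a ^ 2 - b ^ 2) * hc
  refine exists_two_nsmul_some_eq _ (by positivity) (ℓ := c ^ 2) ?_ ?_ ?_
  · rw [hxm, hxn]
    linear_combination -(a ^ 2 * b ^ 2 * c ^ 2) * hc
  · rw [hm, hn]
    linear_combination (c ^ 2 + b ^ 2 - a ^ 2) * hc
  · linear_combination a ^ 2 * c ^ 2 * hc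

end Pythagorean

end E

/-- If `ξ² + η² = ζ²` with `ξ, η, ζ` positive, `m = −ξ⁴` and `n = η⁴ − ξ⁴`, then the point
`(ξζ(ξ+η)(ζ+η), ξηζ(ξ+η)(ζ+ξ)(ζ+η))` has order 8 on `y² = x(x + m)(x + n)`. -/
theorem point_of_order_eight (ξ η ζ : ℕ) (hξ : 0 < ξ) (hη : 0 < η) (hζ : 0 < ζ)
    (hpyth : ξ ^ 2 + η ^ 2 = ζ ^ 2)
    (m n : ℤ) (hm : m = -((ξ : ℤ) ^ 4)) (hn : n = (η : ℤ) ^ 4 - (ξ : ℤ) ^ 4) :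
    ∃ h : (E m n).Nonsingular ((ξ : ℚ) * ζ * ((ξ : ℚ) + η) * ((ζ : ℚ) + η))
        ((ξ : ℚ) * η * ζ * ((ξ : ℚ) + η) * ((ζ : ℚ) + ξ) * ((ζ : ℚ) + η)),
      addOrderOf (WeierstrassCurve.Affine.Point.some _ _ h) = 8 := by
  have hc : (ζ : ℚ) ^ 2 = (ξ : ℚ) ^ 2 + (η : ℚ) ^ 2 := by exact_mod_cast hpyth.symm
  have hm' : (m : ℚ) = -(ξ : ℚ) ^ 4 := by rw [hm]; push_cast; rfl
  have hn' : (n : ℚ) = (η : ℚ) ^ 4 - (ξ : ℚ) ^ 4 := by rw [hn]; push_cast; rfl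
  have ha : (0 : ℚ) < ξ := by exact_mod_cast hξ
  have hb : (0 : ℚ) < η := by exact_mod_cast hη
  have hc₀ : (0 : ℚ) < ζ := by exact_mod_cast hζ
  have hP := E.nonsingular_pythagorean hc hm' hn' ha hb hc₀
  obtain ⟨h₂, two_P⟩ := E.exists_two_nsmul_pythagorean_eq hc hm' hn' ha hb hc₀
  obtain ⟨h₄, four_P⟩ := E.exists_two_nsmul_sq_mul_sq_eq hc hm' hn' h₂ ha.ne' hb.ne' hc₀.ne'
  refine ⟨hP, addOrderOf_eq_prime_pow (p := 2) (n := 2) ?_ ?_⟩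
  · rw [pow_two, mul_nsmul, two_P, four_P]
    exact WeierstrassCurve.Affine.Point.some_ne_zero h₄
  · rw [pow_succ, pow_two, mul_nsmul, mul_nsmul, two_P, four_P, E.two_nsmul_some_zero]
end

section
/- Let p, q be coprime positive integers and k a squarefree positive integer, and suppose there exist coprime nonzero integers a, b with a+2b ≠ 0, 2a+b ≠ 0, a ± b ≠ 0 such that −pk = a³(a+2b) and qk = b³(2a+b). Then k = 1 or k = 3. -/
/-!
A prime `r` dividing `k` divides both `a³(a + 2b)` and `b³(2a + b)`. Since `a` and `b` are
coprime, `r` divides neither `a` nor `b`, so it divides `a + 2b` and `2a + b`, hence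
`2(a + 2b) - (2a + b) = 3b`, hence `3`. A squarefree `k` all of whose prime factors are `3`
divides `3`.
-/

theorem Nat.Squarefree.dvd_of_forall_prime_dvd {k n : ℕ} (hk : Squarefree k) (hn : n ≠ 0)
    (h : ∀ p, p.Prime → p ∣ k → p ∣ n) : k ∣ n :=
  calc k = ∏ p ∈ k.primeFactors, p := (Nat.prod_primeFactors_of_squarefree hk).symm
    _ ∣ ∏ p ∈ n.primeFactors, p := Finset.prod_dvd_prod_of_subset _ _ _ fun p hp ↦
        Nat.mem_primeFactors.mpr
          ⟨Nat.prime_of_mem_primeFactors hp, h p (Nat.prime_of_mem_primeFactors hp)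
            (Nat.dvd_of_mem_primeFactors hp), hn⟩
    _ ∣ n := Nat.prod_primeFactors_dvd n

section CommRing

variable {R : Type*} [CommRing R] {r a b : R}

theorem Prime.not_dvd_of_isCoprime_of_dvd_pow_mul {c : R} {n : ℕ} (hr : Prime r)
    (hab : IsCoprime a b) (h : r ∣ b ^ n * (c * a + b)) : ¬ r ∣ a := by
  intro hra
  have hrb : r ∣ b := by
    rcases hr.dvd_or_dvd h with h | h
    · exact hr.dvd_of_dvd_pow h
    · simpa using dvd_sub h (dvd_mul_of_dvd_right hra c)
  exact hr.not_isUnit (hab.isUnit_of_dvd' hra hrb)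

theorem Prime.dvd_three_of_isCoprime (hr : Prime r) (hab : IsCoprime a b)
    (ha : r ∣ a ^ 3 * (a + 2 * b)) (hb : r ∣ b ^ 3 * (2 * a + b)) : r ∣ 3 := by
  have hra : ¬ r ∣ a := hr.not_dvd_of_isCoprime_of_dvd_pow_mul hab hb
  have hrb : ¬ r ∣ b := hr.not_dvd_of_isCoprime_of_dvd_pow_mul hab.symm (by rwa [add_comm])
  have h₁ : r ∣ a + 2 * b := (hr.dvd_or_dvd ha).resolve_left (mt hr.dvd_of_dvd_pow hra)
  have h₂ : r ∣ 2 * a + b := (hr.dvd_or_dvd hb).resolve_left (mt hr.dvd_of_dvd_pow hrb)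
  have h₃ : r ∣ 3 * b := by
    rw [show 3 * b = 2 * (a + 2 * b) - (2 * a + b) by ring]
    exact dvd_sub (dvd_mul_of_dvd_right h₁ 2) h₂
  exact (hr.dvd_or_dvd h₃).resolve_right hrb

end CommRing

theorem k_eq_one_or_three_of_three_torsion_general (p q k : ℕ) (hsqf : Squarefree k)
    (a b : ℤ) (hab : IsCoprime a b)
    (hm : -((p : ℤ) * k) = a ^ 3 * (a + 2 * b)) (hn : (q : ℤ) * k = b ^ 3 * (2 * a + b)) :
    k = 1 ∨ k = 3 := by
  refine (Nat.dvd_prime Nat.prime_three).mp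
    (Nat.Squarefree.dvd_of_forall_prime_dvd hsqf three_ne_zero fun r hr hrk ↦ ?_)
  have hrk : (r : ℤ) ∣ k := Int.natCast_dvd_natCast.mpr hrk
  have hr3 : (r : ℤ) ∣ 3 := (Nat.prime_iff_prime_int.mp hr).dvd_three_of_isCoprime hab
    (hm ▸ (dvd_mul_of_dvd_right hrk _).neg_right) (hn ▸ dvd_mul_of_dvd_right hrk _)
  exact_mod_cast hr3

/-- If `p, q` are coprime positive integers, `k` is squarefree positive, and there are
coprime nonzero integers `a, b` with `a + 2b ≠ 0`, `2a + b ≠ 0`, `a ± b ≠ 0` such that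
`−pk = a³(a + 2b)` and `qk = b³(2a + b)`, then `k = 1` or `k = 3`. -/
theorem k_eq_one_or_three_of_three_torsion (p q k : ℕ) (hp : 0 < p) (hq : 0 < q)
    (hk : 0 < k) (hpq : Nat.Coprime p q) (hsqf : Squarefree k)
    (a b : ℤ) (ha : a ≠ 0) (hb : b ≠ 0) (hab : IsCoprime a b)
    (h1 : a + 2 * b ≠ 0) (h2 : 2 * a + b ≠ 0) (h3 : a + b ≠ 0) (h4 : a - b ≠ 0)
    (hm : -((p : ℤ) * k) = a ^ 3 * (a + 2 * b)) (hn : (q : ℤ) * k = b ^ 3 * (2 * a + b)) :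
    k = 1 ∨ k = 3 :=
  k_eq_one_or_three_of_three_torsion_general p q k hsqf a b hab hm hn
end

section
/- If t is a prime dividing both a³(a+2b) and b³(2a+b), where a, b are coprime nonzero integers, then t = 3. -/
/-!
A prime dividing `a` and `b³(2a + b) ≡ b⁴ (mod a)` would divide `b` as well, which coprimality
forbids; so `t ∤ a` and symmetrically `t ∤ b`. Hence `t` divides both `a + 2b` and `2a + b`,
and therefore `2(a + 2b) - (2a + b) = 3b`, so `t ∣ 3`.
-/

variable {R : Type*} [CommRing R] {p a b : R}

theorem Prime.not_dvd_of_dvd_pow_mul_add (hp : Prime p) (hab : IsCoprime a b) (n : ℕ) (k : R)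
    (h : p ∣ b ^ n * (k * a + b)) : ¬p ∣ a := by
  intro hpa
  have hpb : p ∣ b ^ (n + 1) := by
    have hb : b ^ (n + 1) = b ^ n * (k * a + b) - k * b ^ n * a := by ring
    exact hb ▸ dvd_sub h (dvd_mul_of_dvd_right hpa _)
  exact hp.not_isUnit (hab.isUnit_of_dvd' hpa (hp.dvd_of_dvd_pow hpb))

theorem Prime.dvd_of_dvd_pow_mul (hp : Prime p) {x y : R} {n : ℕ} (h : p ∣ x ^ n * y)
    (hx : ¬p ∣ x) : p ∣ y :=
  (hp.dvd_or_dvd h).resolve_left (mt hp.dvd_of_dvd_pow hx)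

theorem Prime.dvd_three_of_dvd_pow_three_mul (hp : Prime p) (hab : IsCoprime a b)
    (h1 : p ∣ a ^ 3 * (a + 2 * b)) (h2 : p ∣ b ^ 3 * (2 * a + b)) : p ∣ 3 := by
  have hpa := hp.not_dvd_of_dvd_pow_mul_add hab 3 2 h2
  have hpb := hp.not_dvd_of_dvd_pow_mul_add hab.symm 3 2 (add_comm a (2 * b) ▸ h1)
  have hp3b : p ∣ 3 * b := by
    have h := dvd_sub ((hp.dvd_of_dvd_pow_mul h1 hpa).mul_left 2) (hp.dvd_of_dvd_pow_mul h2 hpb)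
    rwa [show 2 * (a + 2 * b) - (2 * a + b) = 3 * b by ring] at h
  exact (hp.dvd_or_dvd hp3b).resolve_right hpb

theorem prime_dvd_both_eq_three_general (a b : ℤ) (hab : IsCoprime a b)
    (t : ℕ) (ht : t.Prime)
    (h1 : (t : ℤ) ∣ a ^ 3 * (a + 2 * b)) (h2 : (t : ℤ) ∣ b ^ 3 * (2 * a + b)) : t = 3 := by
  have ht3 : (t : ℤ) ∣ 3 := (Nat.prime_iff_prime_int.mp ht).dvd_three_of_dvd_pow_three_mul hab h1 h2
  exact (Nat.prime_dvd_prime_iff_eq ht Nat.prime_three).mp (by exact_mod_cast ht3)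

/-- If a prime `t` divides both `a³(a + 2b)` and `b³(2a + b)` for coprime nonzero
integers `a, b`, then `t = 3`. -/
theorem prime_dvd_both_eq_three (a b : ℤ) (ha : a ≠ 0) (hb : b ≠ 0) (hab : IsCoprime a b)
    (t : ℕ) (ht : t.Prime)
    (h1 : (t : ℤ) ∣ a ^ 3 * (a + 2 * b)) (h2 : (t : ℤ) ∣ b ^ 3 * (2 * a + b)) : t = 3 :=
  prime_dvd_both_eq_three_general a b hab t ht h1 h2
end

section
/- Let sin(θ/2) = ϱ/σ with ϱ, σ coprime positive integers and σ odd, and write cos θ = (σ² − 2ϱ²)/σ² = r/s in lowest terms (r, s both odd). Then the isosceles triangle with sides a = 2σ, a = 2σ, c = 4ϱ and included angle θ has area 2√(s² − r²); i.e., k = 2 is realized as a θ-congruent number by this triangle. -/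
/-! With `c = σ² − 2ϱ²` (from `cos θ = 1 − 2 sin²(θ/2)`), the fraction `c/σ²` is already in
lowest terms because `σ` is odd and prime to `ϱ`; hence `r = c` and `s = σ²`, both odd.
Since `sin θ ≥ 0` on `[0, π]`, `sin θ = √(s² − r²)/s`, so the area `2σ² sin θ` equals
`2√(s² − r²)`. -/

namespace Real

theorem cos_eq_one_sub_two_mul_sin_half_sq (θ : ℝ) : cos θ = 1 - 2 * sin (θ / 2) ^ 2 := by
  rw [← cos_two_mul_eq_one_sub, mul_div_cancel₀ θ two_ne_zero]

theorem sin_eq_sqrt_sq_sub_sq_div {θ r s : ℝ} (h₀ : 0 ≤ θ) (hπ : θ ≤ π) (hs : 0 < s)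
    (hcos : cos θ = r / s) : sin θ = √(s ^ 2 - r ^ 2) / s := by
  rw [sin_eq_sqrt_one_sub_cos_sq h₀ hπ, hcos, div_pow, one_sub_div (pow_pos hs 2).ne',
    sqrt_div' _ (sq_nonneg s), sqrt_sq hs.le]

end Real

theorem Int.isCoprime_sq_sub_two_mul_sq {ϱ σ : ℤ} (hcop : IsCoprime ϱ σ) (hodd : Odd σ) :
    IsCoprime (σ ^ 2 - 2 * ϱ ^ 2) (σ ^ 2) := by
  have h : IsCoprime (2 * ϱ ^ 2) (σ ^ 2) :=
    (Int.isCoprime_two_left.mpr hodd).pow_right.mul_left hcop.pow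
  simpa [sub_eq_neg_add] using h.neg_left.add_mul_left_left 1

theorem Int.eq_and_eq_of_cast_div_eq_cast_div {K : Type*} [Field K] [CharZero K] {a b c d : ℤ}
    (hb : 0 < b) (hd : 0 < d) (hab : IsCoprime a b) (hcd : IsCoprime c d)
    (h : (a : K) / b = c / d) : a = c ∧ b = d :=
  Rat.div_int_inj hb hd (Int.isCoprime_iff_nat_coprime.mp hab)
    (Int.isCoprime_iff_nat_coprime.mp hcd) (Rat.cast_injective (α := K) (by push_cast; exact h))

theorem isosceles_triangle_area_sigma_odd_general (θ : ℝ) (hθ : θ ∈ Set.Ioo 0 Real.pi)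
    (ϱ σ : ℕ) (hcop : Nat.Coprime ϱ σ) (hodd : Odd σ)
    (hsin : Real.sin (θ / 2) = (ϱ : ℝ) / σ)
    (r s : ℤ) (hs : 0 < s) (hrs : IsCoprime r s) (hcos : Real.cos θ = (r : ℝ) / s) :
    Odd r ∧ Odd s ∧
      (r : ℝ) / s = ((σ : ℝ) ^ 2 - 2 * (ϱ : ℝ) ^ 2) / (σ : ℝ) ^ 2 ∧
      ((2 * (σ : ℝ)) ^ 2 / 2) * Real.sin θ =
        2 * Real.sqrt ((s : ℝ) ^ 2 - (r : ℝ) ^ 2) := by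
  have hσ : (σ : ℝ) ≠ 0 := by exact_mod_cast hodd.pos.ne'
  have hoddZ : Odd (σ : ℤ) := by exact_mod_cast hodd
  have hcosσ : Real.cos θ = ((σ : ℝ) ^ 2 - 2 * (ϱ : ℝ) ^ 2) / (σ : ℝ) ^ 2 := by
    rw [Real.cos_eq_one_sub_two_mul_sin_half_sq, hsin]
    field_simp
  have hsinθ := Real.sin_eq_sqrt_sq_sub_sq_div hθ.1.le hθ.2.le (by exact_mod_cast hs) hcos
  have hcopZ : IsCoprime (ϱ : ℤ) σ := Int.isCoprime_iff_gcd_eq_one.mpr hcop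
  have hσ2 : (0 : ℤ) < σ ^ 2 := pow_pos (by exact_mod_cast hodd.pos) 2
  obtain ⟨rfl, rfl⟩ := Int.eq_and_eq_of_cast_div_eq_cast_div (K := ℝ) hs hσ2 hrs
    (Int.isCoprime_sq_sub_two_mul_sq hcopZ hoddZ) (by push_cast; rw [← hcos, hcosσ])
  refine ⟨hoddZ.pow.sub_even (even_two_mul _), hoddZ.pow, by rw [← hcos, hcosσ], ?_⟩
  rw [hsinθ]
  push_cast
  field_simp

/-- If `sin(θ/2) = ϱ/σ` with `ϱ, σ` coprime positive integers and `σ` odd, and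
`cos θ = r/s` in lowest terms with `s > 0`, then `r` and `s` are both odd and the
isosceles triangle with sides `2σ, 2σ, 4ϱ` and included angle `θ` has area
`2√(s² − r²)`; i.e. `k = 2` is realized as a `θ`-congruent number by this triangle. -/
theorem isosceles_triangle_area_sigma_odd (θ : ℝ) (hθ : θ ∈ Set.Ioo 0 Real.pi)
    (ϱ σ : ℕ) (hϱ : 0 < ϱ) (hσ : 0 < σ) (hcop : Nat.Coprime ϱ σ) (hodd : Odd σ)
    (hsin : Real.sin (θ / 2) = (ϱ : ℝ) / σ)
    (r s : ℤ) (hs : 0 < s) (hrs : IsCoprime r s) (hcos : Real.cos θ = (r : ℝ) / s) :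
    Odd r ∧ Odd s ∧
      (r : ℝ) / s = ((σ : ℝ) ^ 2 - 2 * (ϱ : ℝ) ^ 2) / (σ : ℝ) ^ 2 ∧
      ((2 * (σ : ℝ)) ^ 2 / 2) * Real.sin θ =
        2 * Real.sqrt ((s : ℝ) ^ 2 - (r : ℝ) ^ 2) :=
  isosceles_triangle_area_sigma_odd_general θ hθ ϱ σ hcop hodd hsin r s hs hrs hcos
end
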